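/- arXiv:2408.06288 — 3 statements merged into one kernel-verified Lean document; each statement's English description precedes it below -/
import Mathlib

section
/- Under the SNR model with CDF F_γ(x) = γ_lower(l, (x/μ)^{1/r}/k)/Γ(l), as μ → ∞ the outage probability satisfies OP ∼ (1/(l Γ(l))) · ((γ*/μ)^{1/r}/k)^l, i.e., the ratio of OP to (1/(l Γ(l)))((γ*)^{1/r}/(k μ^{1/r}))^l tends to 1. -/
open MeasureTheory Real Filter intervalIntegral

/-- Lower incomplete Gamma function. -/
noncomputable def lowerGamma (l z : ℝ) : ℝ := ∫ t in (0:ℝ)..z, t ^ (l - 1) * Real.exp (-t)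

lemma int_rpow (l z : ℝ) (hl : 0 < l) :
    ∫ t in (0:ℝ)..z, t ^ (l - 1) = z ^ l / l := by
  rw [integral_rpow (Or.inl (by linarith)), sub_add_cancel,
    Real.zero_rpow hl.ne']
  ring

lemma ii_rpow (l z : ℝ) (hl : 0 < l) :
    IntervalIntegrable (fun t : ℝ => t ^ (l - 1)) volume 0 z :=
  intervalIntegral.intervalIntegrable_rpow' (by linarith)

lemma ii_f (l z : ℝ) (hl : 0 < l) (hz : 0 < z) :
    IntervalIntegrable (fun t : ℝ => t ^ (l - 1) * Real.exp (-t)) volume 0 z := by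
  apply (ii_rpow l z hl).mono_fun
  · exact Measurable.aestronglyMeasurable (by fun_prop)
  · filter_upwards [MeasureTheory.ae_restrict_mem measurableSet_uIoc] with t ht
    rw [Set.uIoc_of_le hz.le] at ht
    have h1 : (0:ℝ) < t := ht.1
    have h2 : (0:ℝ) ≤ t ^ (l-1) := Real.rpow_nonneg h1.le _
    simp only [Real.norm_eq_abs, abs_mul, abs_of_nonneg h2, abs_of_pos (Real.exp_pos _)]
    nth_rewrite 2 [← mul_one (t ^ (l-1))]
    exact mul_le_mul_of_nonneg_left (Real.exp_le_one_iff.2 (by linarith)) h2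

lemma lg_le (l z : ℝ) (hl : 0 < l) (hz : 0 < z) : lowerGamma l z ≤ z ^ l / l := by
  rw [lowerGamma, ← int_rpow l z hl]
  apply integral_mono_on hz.le (ii_f l z hl hz) (ii_rpow l z hl)
  intro t ht
  have h2 : (0:ℝ) ≤ t ^ (l-1) := Real.rpow_nonneg ht.1 _
  nth_rewrite 2 [← mul_one (t ^ (l-1))]
  exact mul_le_mul_of_nonneg_left (Real.exp_le_one_iff.2 (by linarith [ht.1])) h2

lemma lg_ge (l z : ℝ) (hl : 0 < l) (hz : 0 < z) :
    Real.exp (-z) * (z ^ l / l) ≤ lowerGamma l z := by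
  have : Real.exp (-z) * (z ^ l / l) = ∫ t in (0:ℝ)..z, t ^ (l-1) * Real.exp (-z) := by
    rw [intervalIntegral.integral_mul_const, int_rpow l z hl]; ring
  rw [this, lowerGamma]
  apply integral_mono_on hz.le ((ii_rpow l z hl).mul_const _) (ii_f l z hl hz)
  intro t ht
  exact mul_le_mul_of_nonneg_left (Real.exp_le_exp.2 (by linarith [ht.2]))
    (Real.rpow_nonneg ht.1 _)

lemma ratio_tendsto (l : ℝ) (hl : 0 < l) :
    Tendsto (fun z => lowerGamma l z / (z ^ l / l)) (nhdsWithin 0 (Set.Ioi 0)) (nhds 1) := by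
  have hexp : Tendsto (fun z : ℝ => Real.exp (-z)) (nhdsWithin 0 (Set.Ioi 0)) (nhds 1) := by
    have := (Real.continuous_exp.comp continuous_neg).tendsto 0
    simp at this
    exact this.mono_left nhdsWithin_le_nhds
  refine tendsto_of_tendsto_of_tendsto_of_le_of_le' hexp tendsto_const_nhds ?_ ?_
  · filter_upwards [self_mem_nhdsWithin] with z hz
    have hz : (0:ℝ) < z := hz
    have hd : 0 < z ^ l / l := div_pos (Real.rpow_pos_of_pos hz l) hl
    rw [le_div_iff₀ hd]
    exact lg_ge l z hl hz
  · filter_upwards [self_mem_nhdsWithin] with z hz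
    have hz : (0:ℝ) < z := hz
    have hd : 0 < z ^ l / l := div_pos (Real.rpow_pos_of_pos hz l) hl
    rw [div_le_one hd]
    exact lg_le l z hl hz

/-- High-SNR asymptotics of the outage probability:
`OP(μ) ∼ (1/(l Γ(l))) ((γ*)^{1/r}/(k μ^{1/r}))^l` as `μ → ∞`. -/
theorem outage_probability_asymptotic
    (l k r γs : ℝ) (hl : 0 < l) (hk : 0 < k) (hr : 1 ≤ r) (hγs : 0 < γs) :
    Tendsto (fun μ : ℝ =>
        (lowerGamma l ((γs / μ) ^ (1 / r) / k) / Real.Gamma l) /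
          ((1 / (l * Real.Gamma l)) * (γs ^ (1 / r) / (k * μ ^ (1 / r))) ^ l))
      atTop (nhds 1) := by
  have hr0 : (0:ℝ) < 1 / r := by positivity
  have hΓ : 0 < Real.Gamma l := Real.Gamma_pos_of_pos hl
  -- z(μ) tends to 0 within Ioi 0
  have hz : Tendsto (fun μ : ℝ => (γs / μ) ^ (1 / r) / k) atTop (nhdsWithin 0 (Set.Ioi 0)) := by
    apply tendsto_nhdsWithin_of_tendsto_nhds_of_eventually_within
    · have h1 : Tendsto (fun μ : ℝ => γs / μ) atTop (nhds 0) :=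
        tendsto_const_nhds.div_atTop tendsto_id
      have h2 : Tendsto (fun μ : ℝ => (γs / μ) ^ (1 / r)) atTop (nhds 0) := by
        have h3 := (Real.continuousAt_rpow_const 0 (1/r) (Or.inr hr0.le)).tendsto.comp h1
        rw [Real.zero_rpow hr0.ne'] at h3
        exact h3
      simpa using h2.div_const k
    · filter_upwards [eventually_gt_atTop 0] with μ hμ
      exact div_pos (Real.rpow_pos_of_pos (div_pos hγs hμ) _) hk
  have key := (ratio_tendsto l hl).comp hz
  apply key.congr'
  filter_upwards [eventually_gt_atTop 0] with μ hμ
  set z := (γs / μ) ^ (1 / r) / k with hzdef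
  have hzpos : 0 < z := div_pos (Real.rpow_pos_of_pos (div_pos hγs hμ) _) hk
  have heq : γs ^ (1 / r) / (k * μ ^ (1 / r)) = z := by
    rw [hzdef, Real.div_rpow hγs.le hμ.le, div_div, mul_comm]
  simp only [Function.comp]
  rw [heq]
  have hzl : 0 < z ^ l := Real.rpow_pos_of_pos hzpos l
  field_simp
  rw [← hzdef]
  ring
end

section
/- Let l > 0, k > 0, μ > 0, p > 0, q > 0, and take the heterodyne case r = 1, so F_γ(x) = γ_lower(l, x/(kμ))/Γ(l). Then ABER = (q^p/(2Γ(p))) ∫_0^∞ e^{−qγ} γ^{p−1} F_γ(γ) dγ = (1/2) I_{1/(1+qkμ)}(l, p), where I_x(a,b) is the regularized incomplete Beta function. -/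
open MeasureTheory Real

/-- Regularized incomplete Beta function `I_x(a,b)`. -/
noncomputable def regIncBeta (a b x : ℝ) : ℝ :=
  (Real.Gamma (a + b) / (Real.Gamma a * Real.Gamma b)) *
    ∫ t in (0:ℝ)..x, t ^ (a - 1) * (1 - t) ^ (b - 1)

open Set

private lemma aberAux_int {s b : ℝ} (hs : 0 < s) (hb : 0 < b) :
    IntegrableOn (fun x : ℝ => x ^ (s - 1) * Real.exp (-(b * x))) (Ioi 0) := by
  have h := Real.GammaIntegral_convergent hs
  have h2 : IntegrableOn (fun x : ℝ => Real.exp (-(b * x)) * (b * x) ^ (s - 1)) (Ioi 0) := by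
    have := (integrableOn_Ioi_comp_mul_left_iff
      (fun x : ℝ => Real.exp (-x) * x ^ (s - 1)) 0 hb).2
    simpa using this (by simpa using h)
  refine IntegrableOn.congr_fun (h2.const_mul (b ^ (1 - s))) (fun x hx => ?_) measurableSet_Ioi
  have hx0 : (0:ℝ) < x := hx
  rw [Real.mul_rpow hb.le hx0.le]
  rw [show b ^ (1-s) * (Real.exp (-(b*x)) * (b ^ (s-1) * x ^ (s-1)))
      = (b ^ (1-s) * b ^ (s-1)) * (x ^ (s-1) * Real.exp (-(b*x))) by ring,
    ← Real.rpow_add hb]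
  norm_num

private lemma aberAux_step1 {l c γ : ℝ} (hc : 0 < c) (hγ : 0 < γ) :
    (∫ t in (0:ℝ)..(γ / c), t ^ (l - 1) * Real.exp (-t))
      = γ ^ (1 + (l - 1)) * ∫ u in Ioo (0:ℝ) (1 / c), u ^ (l - 1) * Real.exp (-(γ * u)) := by
  have hγc : (0:ℝ) ≤ γ / c := by positivity
  rw [intervalIntegral.integral_of_le hγc, integral_Ioc_eq_integral_Ioo]
  have himg : (fun u : ℝ => γ * u) '' Ioo 0 (1 / c) = Ioo 0 (γ / c) := by
    rw [show (fun u : ℝ => γ * u) = (γ * ·) from rfl, Set.image_mul_left_Ioo hγ]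
    rw [mul_zero, mul_one_div]
  rw [← himg,
    integral_image_eq_integral_abs_deriv_smul measurableSet_Ioo
      (f' := fun _ => γ)
      (fun u _ => by simpa using ((hasDerivAt_id u).const_mul γ).hasDerivWithinAt)
      (fun a _ b _ h => mul_left_cancel₀ hγ.ne' h)]
  rw [← integral_const_mul]
  refine setIntegral_congr_fun measurableSet_Ioo (fun u hu => ?_)
  have hu0 : 0 < u := hu.1
  rw [smul_eq_mul, abs_of_pos hγ, Real.mul_rpow hγ.le hu0.le]
  rw [show γ * (γ ^ (l-1) * u ^ (l-1) * Real.exp (-(γ*u)))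
      = (γ * γ ^ (l-1)) * (u ^ (l-1) * Real.exp (-(γ*u))) by ring]
  congr 1
  rw [Real.rpow_add hγ 1 (l-1), Real.rpow_one]

private lemma aberAux_subst {l p q c : ℝ} (hq : 0 < q) (hc : 0 < c) :
    (∫ u in Ioo (0:ℝ) (1 / c), u ^ (l - 1) * (1 / (q + u)) ^ (p + l))
      = q ^ (-p) * ∫ t in Ioo (0:ℝ) (1 / (1 + q * c)), t ^ (l - 1) * (1 - t) ^ (p - 1) := by
  set x := 1 / (1 + q * c) with hx
  have hx0 : 0 < x := by positivity
  have hx1 : x < 1 := by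
    rw [hx]; rw [div_lt_one (by positivity)]; nlinarith
  set φ : ℝ → ℝ := fun t => q * t / (1 - t) with hφ
  have himg : φ '' Ioo 0 x = Ioo 0 (1 / c) := by
    ext u
    simp only [mem_image, mem_Ioo, hφ]
    constructor
    · rintro ⟨t, ⟨ht0, htx⟩, rfl⟩
      have h1t : 0 < 1 - t := by linarith
      constructor
      · positivity
      · rw [div_lt_div_iff₀ h1t hc]
        have h1x : 1 - x = q * c * x := by
          rw [hx]; field_simp; ring
        nlinarith
    · rintro ⟨hu0, huc⟩
      refine ⟨u / (q + u), ⟨by positivity, ?_⟩, ?_⟩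
      · rw [hx, div_lt_div_iff₀ (by positivity) (by positivity)]
        have huc' := (lt_div_iff₀ hc).1 huc
        nlinarith
      · have : 1 - u / (q + u) = q / (q + u) := by field_simp; ring
        rw [this]
        field_simp
  have hderiv : ∀ t ∈ Ioo (0:ℝ) x, HasDerivWithinAt φ (q / (1 - t) ^ 2) (Ioo 0 x) t := by
    intro t ht
    have h1t : (1:ℝ) - t ≠ 0 := by have := ht.2; intro h; nlinarith [hx1]
    have hda := (((hasDerivAt_id t).const_mul q).div
      ((hasDerivAt_const t 1).sub (hasDerivAt_id t)) h1t)
    simp only [id_eq, mul_one, zero_sub] at hda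
    have : HasDerivAt φ (q / (1 - t) ^ 2) t := by
      refine (hda : HasDerivAt φ _ t).congr_deriv ?_
      show (q * (1 - t) - q * t * -1) / (1 - t) ^ 2 = q / (1 - t) ^ 2
      rw [div_left_inj' (pow_ne_zero 2 h1t)]
      ring
    exact this.hasDerivWithinAt
  have hinj : InjOn φ (Ioo 0 x) := by
    intro a ha b hb h
    have h1a : (1:ℝ) - a ≠ 0 := by have := ha.2; intro hh; nlinarith
    have h1b : (1:ℝ) - b ≠ 0 := by have := hb.2; intro hh; nlinarith
    simp only [hφ] at h
    field_simp at h
    nlinarith [hq]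
  rw [← himg, integral_image_eq_integral_abs_deriv_smul measurableSet_Ioo hderiv hinj,
    ← integral_const_mul]
  refine setIntegral_congr_fun measurableSet_Ioo (fun t ht => ?_)
  have ht0 : 0 < t := ht.1
  have h1t : 0 < 1 - t := by have := ht.2; linarith
  have hqu : q + φ t = q / (1 - t) := by
    simp only [hφ]; field_simp; ring
  rw [smul_eq_mul, hqu, abs_of_pos (by positivity)]
  rw [one_div_div, Real.div_rpow h1t.le hq.le]
  simp only [hφ]
  rw [Real.div_rpow (by positivity) h1t.le, Real.mul_rpow hq.le ht0.le]
  rw [show ((1:ℝ) - t) ^ (2:ℕ) = (1 - t) ^ ((2:ℕ):ℝ) by rw [Real.rpow_natCast]]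
  rw [div_eq_mul_inv q, div_eq_mul_inv (q ^ (l-1) * _), div_eq_mul_inv ((1-t) ^ (p+l)),
    ← Real.rpow_neg h1t.le, ← Real.rpow_neg h1t.le, ← Real.rpow_neg hq.le]
  rw [show q * (1-t) ^ (-((2:ℕ):ℝ)) * (q ^ (l-1) * t ^ (l-1) * (1-t) ^ (-(l-1)) *
      ((1-t) ^ (p+l) * q ^ (-(p+l))))
    = (q ^ (1:ℝ) * q ^ (l-1) * q ^ (-(p+l))) *
      ((1-t) ^ (-((2:ℕ):ℝ)) * (1-t) ^ (-(l-1)) * (1-t) ^ (p+l)) * t ^ (l-1) by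
        rw [Real.rpow_one]; ring]
  rw [← Real.rpow_add hq, ← Real.rpow_add hq, ← Real.rpow_add h1t, ← Real.rpow_add h1t]
  rw [show (1:ℝ) + (l-1) + -(p+l) = -p by ring,
    show -((2:ℕ):ℝ) + -(l-1) + (p+l) = p - 1 by push_cast; ring]
  ring

/-- ABER in the heterodyne case `r = 1` with Gamma SNR:
`(q^p/(2Γ(p))) ∫_0^∞ e^{−qγ} γ^{p−1} γ_lower(l, γ/(kμ))/Γ(l) dγ = (1/2) I_{1/(1+qkμ)}(l, p)`. -/
theorem aber_closed_form_heterodyne (l k μ p q : ℝ)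
    (hl : 0 < l) (hk : 0 < k) (hμ : 0 < μ) (hp : 0 < p) (hq : 0 < q) :
    (q ^ p / (2 * Real.Gamma p)) *
        (∫ γ in Set.Ioi (0 : ℝ),
          Real.exp (-q * γ) * γ ^ (p - 1) * (lowerGamma l (γ / (k * μ)) / Real.Gamma l))
      = (1 / 2) * regIncBeta l p (1 / (1 + q * k * μ)) := by
  have hc : 0 < k * μ := mul_pos hk hμ
  set c := k * μ with hcdef
  have hΓl : Real.Gamma l ≠ 0 := (Real.Gamma_pos_of_pos hl).ne'
  have hΓp : Real.Gamma p ≠ 0 := (Real.Gamma_pos_of_pos hp).ne'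
  set G : ℝ → ℝ → ℝ := fun γ u =>
    u ^ (l - 1) * (γ ^ (p + l - 1) * Real.exp (-((q + u) * γ))) with hG
  -- Step A : rewrite the integrand on `Ioi 0`
  have hA : ∫ γ in Ioi (0:ℝ),
        Real.exp (-q * γ) * γ ^ (p - 1) * (lowerGamma l (γ / c) / Real.Gamma l)
      = (Real.Gamma l)⁻¹ * ∫ γ in Ioi (0:ℝ), ∫ u in Ioo (0:ℝ) (1 / c), G γ u := by
    rw [← integral_const_mul]
    refine setIntegral_congr_fun measurableSet_Ioi (fun γ hγ => ?_)
    have hγ0 : (0:ℝ) < γ := hγ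
    have h1 : lowerGamma l (γ / c)
        = γ ^ (1 + (l-1)) * ∫ u in Ioo (0:ℝ) (1 / c), u ^ (l-1) * Real.exp (-(γ * u)) :=
      aberAux_step1 hc hγ0
    have h2 : ∫ u in Ioo (0:ℝ) (1 / c), G γ u
        = (γ ^ (p + l - 1) * Real.exp (-q * γ)) *
            ∫ u in Ioo (0:ℝ) (1 / c), u ^ (l-1) * Real.exp (-(γ * u)) := by
      rw [← integral_const_mul]
      refine setIntegral_congr_fun measurableSet_Ioo (fun u hu => ?_)
      simp only [hG]
      rw [show -((q + u) * γ) = (-q * γ) + (-(γ * u)) by ring, Real.exp_add]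
      ring
    rw [h1, h2]
    have h3 : γ ^ (p - 1) * γ ^ (1 + (l-1)) = γ ^ (p + l - 1) := by
      rw [← Real.rpow_add hγ0, show p - 1 + (1 + (l-1)) = p + l - 1 by ring]
    rw [div_eq_mul_inv, ← h3]
    ring
  -- Step B : Fubini
  have hInt : Integrable (Function.uncurry G)
      ((volume.restrict (Ioi 0)).prod (volume.restrict (Ioo 0 (1 / c)))) := by
    have hg : IntegrableOn (fun γ : ℝ => γ ^ (p + l - 1) * Real.exp (-(q * γ))) (Ioi 0) :=
      aberAux_int (by linarith) hq
    have hh : IntegrableOn (fun u : ℝ => u ^ (l - 1)) (Ioo 0 (1 / c)) := by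
      have := intervalIntegral.intervalIntegrable_rpow' (a := 0) (b := 1 / c)
        (by linarith : (-1:ℝ) < l - 1)
      rwa [intervalIntegrable_iff_integrableOn_Ioo_of_le (by positivity)] at this
    refine (hg.mul_prod hh).mono' ?_ ?_
    · apply Measurable.aestronglyMeasurable
      fun_prop
    · rw [Measure.prod_restrict]
      filter_upwards [ae_restrict_mem (measurableSet_Ioi.prod measurableSet_Ioo)] with z hz
      obtain ⟨hz1, hz2⟩ := hz
      have hγ : (0:ℝ) < z.1 := hz1
      have hu0 : (0:ℝ) < z.2 := hz2.1
      simp only [Function.uncurry, hG]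
      rw [Real.norm_eq_abs, abs_of_nonneg (by positivity)]
      have hexp : Real.exp (-((q + z.2) * z.1)) ≤ Real.exp (-(q * z.1)) := by
        apply Real.exp_le_exp.2; nlinarith
      calc z.2 ^ (l-1) * (z.1 ^ (p+l-1) * Real.exp (-((q + z.2) * z.1)))
          ≤ z.2 ^ (l-1) * (z.1 ^ (p+l-1) * Real.exp (-(q * z.1))) := by
            apply mul_le_mul_of_nonneg_left _ (by positivity)
            apply mul_le_mul_of_nonneg_left hexp (by positivity)
        _ = z.1 ^ (p+l-1) * Real.exp (-(q*z.1)) * z.2 ^ (l-1) := by ring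
  have hswap : ∫ γ in Ioi (0:ℝ), ∫ u in Ioo (0:ℝ) (1 / c), G γ u
      = ∫ u in Ioo (0:ℝ) (1 / c), ∫ γ in Ioi (0:ℝ), G γ u :=
    integral_integral_swap hInt
  -- Step C : inner Gamma integral
  have hC : ∫ u in Ioo (0:ℝ) (1 / c), ∫ γ in Ioi (0:ℝ), G γ u
      = Real.Gamma (p + l) *
          ∫ u in Ioo (0:ℝ) (1 / c), u ^ (l - 1) * (1 / (q + u)) ^ (p + l) := by
    rw [← integral_const_mul]
    refine setIntegral_congr_fun measurableSet_Ioo (fun u hu => ?_)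
    have hu0 : (0:ℝ) < u := hu.1
    have hqu : (0:ℝ) < q + u := by linarith
    simp only [hG]
    rw [integral_const_mul, integral_rpow_mul_exp_neg_mul_Ioi (by linarith : (0:ℝ) < p + l) hqu]
    ring
  -- Assemble
  rw [show (1 : ℝ) + q * k * μ = 1 + q * c by rw [hcdef]; ring] at *
  rw [hA, hswap, hC, aberAux_subst hq hc, regIncBeta]
  have hIoo : (∫ t in (0:ℝ)..(1 / (1 + q * c)), t ^ (l - 1) * (1 - t) ^ (p - 1))
      = ∫ t in Ioo (0:ℝ) (1 / (1 + q * c)), t ^ (l - 1) * (1 - t) ^ (p - 1) := by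
    rw [intervalIntegral.integral_of_le (by positivity), integral_Ioc_eq_integral_Ioo]
  rw [hIoo, show Real.Gamma (l + p) = Real.Gamma (p + l) by rw [add_comm]]
  have hqp : q ^ p * q ^ (-p) = 1 := by
    rw [← Real.rpow_add hq]; norm_num
  set B := ∫ t in Ioo (0:ℝ) (1 / (1 + q * c)), t ^ (l - 1) * (1 - t) ^ (p - 1)
  linear_combination (Real.Gamma (p + l) * B / (2 * Real.Gamma p * Real.Gamma l)) * hqp
end

section
/- With γ_d ∼ Gamma(l_d, k_d μ_d), γ_e ∼ Gamma(l_e, k_e μ_e) independent and Ψ > 0 fixed, SOP_L(μ_d) = P[γ_d < Ψγ_e] is strictly decreasing in μ_d and, as μ_d → ∞, SOP_L(μ_d) ∼ C · μ_d^{−l_d} with C = (Ψ k_e μ_e / k_d)^{l_d} Γ(l_d + l_e) / (l_d Γ(l_d) Γ(l_e)), i.e., the secrecy diversity order equals l_d. -/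
open MeasureTheory ProbabilityTheory Real Filter Set
open scoped ENNReal NNReal

namespace SOPLAux

lemma measurable_gammaPDF (a r : ℝ) : Measurable (gammaPDF a r) := by
  unfold ProbabilityTheory.gammaPDF
  exact (measurable_gammaPDFReal a r).ennreal_ofReal

noncomputable def p0 (a x : ℝ) : ℝ≥0∞ :=
  ENNReal.ofReal (if 0 ≤ x then x ^ (a - 1) / Real.Gamma a else 0)

lemma measurable_p0 (a : ℝ) : Measurable (p0 a) := by
  apply Measurable.ennreal_ofReal
  exact Measurable.ite (measurableSet_le measurable_const measurable_id)
    (((measurable_id'.pow_const _)).div_const _) measurable_const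

noncomputable def Gfun (a b re Ψ c : ℝ) (z : ℝ × ℝ) : ℝ≥0∞ :=
  if z.2 < Ψ * z.1 then
    ENNReal.ofReal (Real.exp (-(c * z.2))) * p0 a z.2 * gammaPDF b re z.1
  else 0

lemma measurable_Gfun (a b re Ψ c : ℝ) : Measurable (Gfun a b re Ψ c) := by
  apply Measurable.ite (measurableSet_lt measurable_snd (measurable_fst.const_mul Ψ))
    ?_ measurable_const
  exact (((measurable_snd.const_mul c).neg.exp.ennreal_ofReal).mul
    ((measurable_p0 a).comp measurable_snd)).mul
    ((measurable_gammaPDF b re).comp measurable_fst)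

noncomputable def Nfun (a b re Ψ c : ℝ) : ℝ≥0∞ :=
  ∫⁻ z, Gfun a b re Ψ c z ∂((volume : Measure ℝ).prod (volume : Measure ℝ))

noncomputable def Phi (a s : ℝ) : ℝ≥0∞ := ∫⁻ x in Iio s, gammaPDF a 1 x

lemma measurable_param_integral {f : ℝ → ℝ≥0∞} (hf : Measurable f) (Ψ : ℝ) :
    Measurable fun y : ℝ => ∫⁻ x in Iio (Ψ * y), f x := by
  have h : ∀ y : ℝ, ∫⁻ x in Iio (Ψ * y), f x
      = ∫⁻ x, (fun z : ℝ × ℝ => if z.2 < Ψ * z.1 then f z.2 else 0) (y, x) := by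
    intro y
    rw [← lintegral_indicator measurableSet_Iio]
    exact lintegral_congr fun x => by simp [Set.indicator_apply, Set.mem_Iio]
  simp_rw [h]
  exact Measurable.lintegral_prod_right'
    (Measurable.ite (measurableSet_lt measurable_snd (measurable_fst.const_mul Ψ))
      (hf.comp measurable_snd) measurable_const)

lemma rep (a b re Ψ : ℝ) (ha : 0 < a) (hb : 0 < b) (hre : 0 < re) {c : ℝ} (hc : 0 < c) :
    ((gammaMeasure a c).prod (gammaMeasure b re)) {p : ℝ × ℝ | p.1 < Ψ * p.2}
      = ∫⁻ y, gammaPDF b re y * ∫⁻ x in Iio (Ψ * y), gammaPDF a c x := by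
  have hP1 : IsProbabilityMeasure (gammaMeasure a c) := isProbabilityMeasure_gammaMeasure ha hc
  have hP2 : IsProbabilityMeasure (gammaMeasure b re) := isProbabilityMeasure_gammaMeasure hb hre
  have hS : MeasurableSet {p : ℝ × ℝ | p.1 < Ψ * p.2} :=
    measurableSet_lt measurable_fst (measurable_snd.const_mul Ψ)
  rw [Measure.prod_apply_symm hS]
  have h1 : ∀ y : ℝ,
      gammaMeasure a c ((fun x => (x, y)) ⁻¹' {p : ℝ × ℝ | p.1 < Ψ * p.2})
        = ∫⁻ x in Iio (Ψ * y), gammaPDF a c x := by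
    intro y
    have : ((fun x => (x, y)) ⁻¹' {p : ℝ × ℝ | p.1 < Ψ * p.2}) = Iio (Ψ * y) := rfl
    rw [this, gammaMeasure, withDensity_apply _ measurableSet_Iio]
  simp_rw [h1]
  rw [show gammaMeasure b re = volume.withDensity (gammaPDF b re) from rfl,
    lintegral_withDensity_eq_lintegral_mul _ (measurable_gammaPDF b re)
      (measurable_param_integral (measurable_gammaPDF a c) Ψ)]
  rfl

lemma gammaPDF_scale {a c : ℝ} (ha : 0 < a) (hc : 0 < c) (x : ℝ) :
    gammaPDF a c x = ENNReal.ofReal c * gammaPDF a 1 (c * x) := by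
  rcases le_or_gt 0 x with hx | hx
  · rw [gammaPDF_of_nonneg hx, gammaPDF_of_nonneg (mul_nonneg hc.le hx),
      ← ENNReal.ofReal_mul hc.le]
    congr 1
    rw [Real.one_rpow, one_mul, Real.mul_rpow hc.le hx]
    have hca : c ^ a = c * c ^ (a - 1) := by
      rw [Real.rpow_sub hc, Real.rpow_one]
      field_simp
    rw [hca]
    ring
  · rw [gammaPDF_of_neg hx, gammaPDF_of_neg (by nlinarith : c * x < 0), mul_zero]

lemma kernel_eq {a c : ℝ} (ha : 0 < a) (hc : 0 < c) (t : ℝ) :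
    ∫⁻ x in Iio t, gammaPDF a c x = Phi a (c * t) := by
  have hg : Measurable fun x : ℝ => gammaPDF a 1 (c * x) :=
    (measurable_gammaPDF a 1).comp (measurable_id.const_mul c)
  calc ∫⁻ x in Iio t, gammaPDF a c x
      = ∫⁻ x in Iio t, ENNReal.ofReal c * gammaPDF a 1 (c * x) := by
        exact lintegral_congr fun x => gammaPDF_scale ha hc x
    _ = ENNReal.ofReal c * ∫⁻ x in Iio t, gammaPDF a 1 (c * x) :=
        lintegral_const_mul _ hg
    _ = ENNReal.ofReal c * ∫⁻ x, (Iio (c * t)).indicator (gammaPDF a 1) (c * x) := by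
        congr 1
        rw [← lintegral_indicator measurableSet_Iio]
        refine lintegral_congr fun x => ?_
        by_cases hx : x < t
        · simp [Set.indicator_apply, hx, (mul_lt_mul_iff_right₀ hc).mpr hx]
        · have : ¬ (c * x < c * t) := by
            intro h; exact hx ((mul_lt_mul_iff_right₀ hc).mp h)
          simp [Set.indicator_apply, hx, this]
    _ = ENNReal.ofReal c * ∫⁻ u, (Iio (c * t)).indicator (gammaPDF a 1) u
          ∂(Measure.map (fun x : ℝ => c * x) volume) := by
        congr 1
        exact (lintegral_map ((measurable_gammaPDF a 1).indicator measurableSet_Iio)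
          (measurable_const_mul c)).symm
    _ = Phi a (c * t) := by
        rw [Real.map_volume_mul_left hc.ne', lintegral_smul_measure,
          abs_of_pos (inv_pos.mpr hc), lintegral_indicator measurableSet_Iio,
          smul_eq_mul, ← mul_assoc, ← ENNReal.ofReal_mul hc.le, mul_inv_cancel₀ hc.ne',
          ENNReal.ofReal_one, one_mul]
        rfl

lemma phi_mono (a : ℝ) : Monotone (Phi a) :=
  fun _ _ hst => lintegral_mono_set (Iio_subset_Iio hst)

lemma phi_le_one {a : ℝ} (ha : 0 < a) (s : ℝ) : Phi a s ≤ 1 :=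
  le_trans (setLIntegral_le_lintegral _ _) (le_of_eq (lintegral_gammaPDF_eq_one ha one_pos))

lemma phi_measurable (a : ℝ) : Measurable (Phi a) := (phi_mono a).measurable

lemma phi_strict {a : ℝ} (ha : 0 < a) {s t : ℝ} (hs : 0 < s) (hst : s < t) :
    Phi a s < Phi a t := by
  have hdisj : Disjoint (Iio s) (Ico s t) :=
    Set.disjoint_left.mpr fun x hx hx' => absurd hx'.1 (not_le.mpr hx)
  have hsplit : Phi a t = Phi a s + ∫⁻ x in Ico s t, gammaPDF a 1 x := by
    rw [Phi, Phi, ← Iio_union_Ico_eq_Iio hst.le, lintegral_union measurableSet_Ico hdisj]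
  rw [hsplit]
  refine ENNReal.lt_add_right (lt_of_le_of_lt (phi_le_one ha s) ENNReal.one_lt_top).ne ?_
  refine ne_of_gt (lt_of_lt_of_le ?_ (lintegral_mono_set Ioo_subset_Ico_self))
  rw [lintegral_pos_iff_support (measurable_gammaPDF a 1),
    Measure.restrict_apply (measurableSet_support (measurable_gammaPDF a 1))]
  have h1 : (0:ℝ≥0∞) < volume (Ioo s t) := by
    rw [Real.volume_Ioo]
    exact ENNReal.ofReal_pos.mpr (by linarith)
  refine lt_of_lt_of_le h1 (measure_mono fun x hx => ⟨?_, hx⟩)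
  have hpos : 0 < gammaPDFReal a 1 x := gammaPDFReal_pos ha one_pos (hs.trans hx.1)
  show gammaPDF a 1 x ≠ 0
  unfold ProbabilityTheory.gammaPDF
  simpa [ENNReal.ofReal_eq_zero, not_le] using hpos

lemma measure_lt_measure (a b re Ψ : ℝ) (ha : 0 < a) (hb : 0 < b) (hre : 0 < re)
    (hΨ : 0 < Ψ) {c1 c2 : ℝ} (hc1 : 0 < c1) (hc12 : c1 < c2) :
    ((gammaMeasure a c1).prod (gammaMeasure b re)) {p : ℝ × ℝ | p.1 < Ψ * p.2}
      < ((gammaMeasure a c2).prod (gammaMeasure b re)) {p : ℝ × ℝ | p.1 < Ψ * p.2} := by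
  have hc2 : 0 < c2 := hc1.trans hc12
  rw [rep a b re Ψ ha hb hre hc1, rep a b re Ψ ha hb hre hc2]
  have hk1 : ∀ y : ℝ, ∫⁻ x in Iio (Ψ * y), gammaPDF a c1 x = Phi a (c1 * (Ψ * y)) :=
    fun y => kernel_eq ha hc1 (Ψ * y)
  have hk2 : ∀ y : ℝ, ∫⁻ x in Iio (Ψ * y), gammaPDF a c2 x = Phi a (c2 * (Ψ * y)) :=
    fun y => kernel_eq ha hc2 (Ψ * y)
  simp_rw [hk1, hk2]
  have hzero : ∀ c : ℝ, ∫⁻ y in (Ioi (0:ℝ))ᶜ, gammaPDF b re y * Phi a (c * (Ψ * y)) = 0 := by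
    intro c
    rw [compl_Ioi,
      setLIntegral_congr_fun_ae measurableSet_Iic (ae_of_all _ fun y (hy : y ≤ 0) => ?_),
      lintegral_zero]
    rcases lt_or_eq_of_le hy with hy' | hy'
    · rw [gammaPDF_of_neg hy', zero_mul]
    · have hphi : Phi a (c * (Ψ * y)) = 0 := by
        rw [hy', mul_zero, mul_zero]
        exact lintegral_gammaPDF_of_nonpos le_rfl
      rw [hphi, mul_zero]
  have hfin : ∀ c : ℝ, (∫⁻ y in Ioi (0:ℝ), gammaPDF b re y * Phi a (c * (Ψ * y))) ≠ ∞ := by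
    intro c
    have hle : (∫⁻ y in Ioi (0:ℝ), gammaPDF b re y * Phi a (c * (Ψ * y)))
        ≤ ∫⁻ y, gammaPDF b re y := by
      refine le_trans (setLIntegral_le_lintegral _ _) (lintegral_mono fun y => ?_)
      calc gammaPDF b re y * Phi a (c * (Ψ * y)) ≤ gammaPDF b re y * 1 :=
            mul_le_mul_right (phi_le_one ha _) _
        _ = gammaPDF b re y := mul_one _
    rw [lintegral_gammaPDF_eq_one hb hre] at hle
    exact (lt_of_le_of_lt hle ENNReal.one_lt_top).ne
  have hmain : (∫⁻ y in Ioi (0:ℝ), gammaPDF b re y * Phi a (c1 * (Ψ * y)))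
      < ∫⁻ y in Ioi (0:ℝ), gammaPDF b re y * Phi a (c2 * (Ψ * y)) := by
    refine lintegral_strict_mono ?_ ?_ (hfin c1) ?_
    · intro h0
      have h2 := congrArg (fun m : Measure ℝ => m Set.univ) h0
      simp [Measure.restrict_apply_univ, Real.volume_Ioi] at h2
    · exact ((measurable_gammaPDF b re).mul ((phi_measurable a).comp
        ((measurable_id.const_mul Ψ).const_mul c2))).aemeasurable
    · rw [ae_restrict_iff' measurableSet_Ioi]
      refine ae_of_all _ fun y (hy : 0 < y) => ?_
      have hpdf : 0 < gammaPDFReal b re y := gammaPDFReal_pos hb hre hy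
      have h0 : gammaPDF b re y ≠ 0 := by
        unfold ProbabilityTheory.gammaPDF
        simpa [ENNReal.ofReal_eq_zero, not_le] using hpdf
      refine ENNReal.mul_lt_mul_right h0 ?_ ?_
      · unfold ProbabilityTheory.gammaPDF; exact ENNReal.ofReal_ne_top
      · exact phi_strict ha (by positivity) (mul_lt_mul_of_pos_right hc12 (mul_pos hΨ hy))
  calc (∫⁻ y, gammaPDF b re y * Phi a (c1 * (Ψ * y)))
      = (∫⁻ y in Ioi (0:ℝ), gammaPDF b re y * Phi a (c1 * (Ψ * y)))
        + ∫⁻ y in (Ioi (0:ℝ))ᶜ, gammaPDF b re y * Phi a (c1 * (Ψ * y)) :=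
        (lintegral_add_compl _ measurableSet_Ioi).symm
    _ = ∫⁻ y in Ioi (0:ℝ), gammaPDF b re y * Phi a (c1 * (Ψ * y)) := by
        rw [hzero c1, add_zero]
    _ < ∫⁻ y in Ioi (0:ℝ), gammaPDF b re y * Phi a (c2 * (Ψ * y)) := hmain
    _ ≤ (∫⁻ y in Ioi (0:ℝ), gammaPDF b re y * Phi a (c2 * (Ψ * y)))
        + ∫⁻ y in (Ioi (0:ℝ))ᶜ, gammaPDF b re y * Phi a (c2 * (Ψ * y)) := le_self_add
    _ = ∫⁻ y, gammaPDF b re y * Phi a (c2 * (Ψ * y)) :=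
        lintegral_add_compl _ measurableSet_Ioi

lemma Gfun_anti (a b re Ψ : ℝ) {c1 c2 : ℝ} (h1 : 0 ≤ c1) (h12 : c1 ≤ c2) (z : ℝ × ℝ) :
    Gfun a b re Ψ c2 z ≤ Gfun a b re Ψ c1 z := by
  unfold Gfun
  split_ifs with h
  · by_cases hx : 0 ≤ z.2
    · refine mul_le_mul_left (mul_le_mul_left ?_ _) _
      refine ENNReal.ofReal_le_ofReal (Real.exp_le_exp.mpr ?_)
      nlinarith
    · have hp0 : p0 a z.2 = 0 := by
        unfold p0
        rw [if_neg hx, ENNReal.ofReal_zero]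
      rw [hp0, mul_zero, zero_mul, mul_zero, zero_mul]
  · exact le_rfl

lemma rep2 (a b re Ψ : ℝ) (ha : 0 < a) (hb : 0 < b) (hre : 0 < re) {c : ℝ} (hc : 0 < c) :
    ((gammaMeasure a c).prod (gammaMeasure b re)) {p : ℝ × ℝ | p.1 < Ψ * p.2}
      = ENNReal.ofReal (c ^ a) * Nfun a b re Ψ c := by
  rw [rep a b re Ψ ha hb hre hc]
  have hq : Measurable fun x : ℝ => ENNReal.ofReal (Real.exp (-(c * x))) * p0 a x :=
    ((measurable_id.const_mul c).neg.exp.ennreal_ofReal).mul (measurable_p0 a)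
  have hfact : ∀ x : ℝ, gammaPDF a c x
      = ENNReal.ofReal (c ^ a) * (ENNReal.ofReal (Real.exp (-(c * x))) * p0 a x) := by
    intro x
    by_cases hx : 0 ≤ x
    · rw [gammaPDF_of_nonneg hx]
      unfold p0
      rw [if_pos hx, ← ENNReal.ofReal_mul (exp_nonneg _),
        ← ENNReal.ofReal_mul (by positivity : (0:ℝ) ≤ c ^ a)]
      congr 1
      ring
    · push_neg at hx
      rw [gammaPDF_of_neg hx]
      unfold p0
      rw [if_neg (not_le.mpr hx), ENNReal.ofReal_zero, mul_zero, mul_zero]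
  have hinner : ∀ y : ℝ, (∫⁻ x in Iio (Ψ * y), gammaPDF a c x)
      = ENNReal.ofReal (c ^ a)
        * ∫⁻ x in Iio (Ψ * y), ENNReal.ofReal (Real.exp (-(c * x))) * p0 a x := by
    intro y
    rw [← lintegral_const_mul _ hq]
    exact lintegral_congr fun x => hfact x
  simp_rw [hinner]
  have hcomm : ∀ y : ℝ, gammaPDF b re y * (ENNReal.ofReal (c ^ a)
        * ∫⁻ x in Iio (Ψ * y), ENNReal.ofReal (Real.exp (-(c * x))) * p0 a x)
      = ENNReal.ofReal (c ^ a) * (gammaPDF b re y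
        * ∫⁻ x in Iio (Ψ * y), ENNReal.ofReal (Real.exp (-(c * x))) * p0 a x) := by
    intro y; ring
  simp_rw [hcomm]
  rw [lintegral_const_mul _ (f := fun y => gammaPDF b re y * ∫⁻ x in Iio (Ψ * y), ENNReal.ofReal (Real.exp (-(c * x))) * p0 a x)
    ((measurable_gammaPDF b re).mul (measurable_param_integral hq Ψ))]
  congr 1
  rw [Nfun, lintegral_prod _ (measurable_Gfun a b re Ψ c).aemeasurable]
  refine (lintegral_congr fun y => ?_).symm
  have hGy : (fun x => Gfun a b re Ψ c (y, x))
      = (Iio (Ψ * y)).indicator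
          (fun x => (ENNReal.ofReal (Real.exp (-(c * x))) * p0 a x) * gammaPDF b re y) := by
    funext x
    simp only [Gfun, Set.indicator_apply, Set.mem_Iio, mul_assoc]
  rw [hGy, lintegral_indicator measurableSet_Iio, lintegral_mul_const _ hq, mul_comm]

lemma Nfun_le (a b re Ψ : ℝ) {c : ℝ} (hc : 0 ≤ c) : Nfun a b re Ψ c ≤ Nfun a b re Ψ 0 :=
  lintegral_mono fun z => Gfun_anti a b re Ψ le_rfl hc z

lemma Nfun_tendsto (a b re Ψ kd : ℝ) (hkd : 0 < kd) :
    Tendsto (fun n : ℕ => Nfun a b re Ψ (1 / (kd * ((n : ℝ) + 1)))) atTop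
      (nhds (Nfun a b re Ψ 0)) := by
  have hcpos : ∀ n : ℕ, 0 < 1 / (kd * ((n : ℝ) + 1)) := by
    intro n; positivity
  apply lintegral_tendsto_of_tendsto_of_monotone
  · exact fun n => (measurable_Gfun a b re Ψ _).aemeasurable
  · refine ae_of_all _ fun z => ?_
    intro n m hnm
    refine Gfun_anti a b re Ψ (hcpos m).le ?_ z
    apply one_div_le_one_div_of_le (by positivity)
    have : (n : ℝ) ≤ (m : ℝ) := Nat.cast_le.mpr hnm
    nlinarith
  · refine ae_of_all _ fun z => ?_
    have hc0 : Tendsto (fun n : ℕ => 1 / (kd * ((n : ℝ) + 1))) atTop (nhds 0) := by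
      have h1 := tendsto_one_div_add_atTop_nhds_zero_nat (𝕜 := ℝ)
      have h2 : (fun n : ℕ => 1 / (kd * ((n : ℝ) + 1)))
          = fun n : ℕ => (1 / kd) * (1 / ((n : ℝ) + 1)) := by
        funext n
        rw [one_div_mul_one_div]
      rw [h2]
      simpa using h1.const_mul (1 / kd)
    unfold Gfun
    by_cases h : z.2 < Ψ * z.1
    · simp only [if_pos h]
      have hexp : Tendsto (fun n : ℕ => ENNReal.ofReal (Real.exp (-(1 / (kd * ((n : ℝ) + 1)) * z.2))))
          atTop (nhds (ENNReal.ofReal (Real.exp (-(0 * z.2))))) := by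
        refine (ENNReal.continuous_ofReal.tendsto _).comp ?_
        refine (Real.continuous_exp.tendsto _).comp ?_
        exact (hc0.mul_const z.2).neg
      refine ENNReal.Tendsto.mul_const (ENNReal.Tendsto.mul_const hexp (Or.inl ?_)) (Or.inr ?_)
      · simp [Real.exp_pos]
      · unfold ProbabilityTheory.gammaPDF
        exact ENNReal.ofReal_ne_top
    · simp only [if_neg h]
      exact tendsto_const_nhds

lemma p0_int_nonpos (a : ℝ) {t : ℝ} (ht : t ≤ 0) : ∫⁻ x in Iio t, p0 a x = 0 := by
  rw [setLIntegral_congr_fun_ae measurableSet_Iio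
    (ae_of_all _ fun x (hx : x < t) => ?_), lintegral_zero]
  show p0 a x = 0
  unfold p0
  rw [if_neg (by linarith), ENNReal.ofReal_zero]

lemma p0_int_pos {a : ℝ} (ha : 0 < a) {t : ℝ} (ht : 0 < t) :
    ∫⁻ x in Iio t, p0 a x = ENNReal.ofReal (t ^ a / a / Real.Gamma a) := by
  have hdisj : Disjoint (Iio (0:ℝ)) (Ico 0 t) :=
    Set.disjoint_left.mpr fun x hx hx' => absurd hx'.1 (not_le.mpr hx)
  have hsplit : ∫⁻ x in Iio t, p0 a x
      = (∫⁻ x in Iio (0:ℝ), p0 a x) + ∫⁻ x in Ico 0 t, p0 a x := by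
    rw [← Iio_union_Ico_eq_Iio ht.le, lintegral_union measurableSet_Ico hdisj]
  have h0 : ∫⁻ x in Iio (0:ℝ), p0 a x = 0 := p0_int_nonpos a le_rfl
  have hIoc : ∫⁻ x in Ico 0 t, p0 a x
      = ∫⁻ x in Ioc 0 t, ENNReal.ofReal (x ^ (a - 1) / Real.Gamma a) := by
    rw [Measure.restrict_congr_set Ico_ae_eq_Ioc]
    refine setLIntegral_congr_fun_ae measurableSet_Ioc (ae_of_all _ fun x hx => ?_)
    unfold p0
    rw [if_pos hx.1.le]
  have hint : IntegrableOn (fun x : ℝ => x ^ (a - 1) / Real.Gamma a) (Ioc 0 t) volume :=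
    (intervalIntegral.intervalIntegrable_rpow' (by linarith)).1.div_const _
  have hnn : 0 ≤ᵐ[volume.restrict (Ioc 0 t)] fun x : ℝ => x ^ (a - 1) / Real.Gamma a := by
    rw [EventuallyLE, ae_restrict_iff' measurableSet_Ioc]
    refine ae_of_all _ fun x hx => ?_
    exact div_nonneg (Real.rpow_nonneg hx.1.le _) (Real.Gamma_nonneg_of_nonneg ha.le)
  have hval : ∫ x in Ioc (0:ℝ) t, x ^ (a - 1) / Real.Gamma a = t ^ a / a / Real.Gamma a := by
    rw [integral_div]
    congr 1
    rw [← intervalIntegral.integral_of_le ht.le,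
      integral_rpow (Or.inl (by linarith : (-1:ℝ) < a - 1))]
    have h1 : a - 1 + 1 = a := by ring
    rw [h1, Real.zero_rpow ha.ne', sub_zero]
  rw [hsplit, h0, zero_add, hIoc, ← ofReal_integral_eq_lintegral_ofReal hint hnn, hval]

lemma gamma_lintegral_Ioi {s r : ℝ} (hs : 0 < s) (hr : 0 < r) :
    ∫⁻ y in Ioi (0:ℝ), gammaPDF s r y = 1 := by
  have h1 := lintegral_gammaPDF_eq_one hs hr
  rw [← lintegral_add_compl (gammaPDF s r) measurableSet_Ioi] at h1
  have h2 : ∫⁻ y in (Ioi (0:ℝ))ᶜ, gammaPDF s r y = 0 := by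
    rw [compl_Ioi, ← Measure.restrict_congr_set Iio_ae_eq_Iic,
      setLIntegral_congr_fun_ae measurableSet_Iio
        (ae_of_all _ fun y (hy : y < 0) => gammaPDF_of_neg hy), lintegral_zero]
  rw [h2, add_zero] at h1
  exact h1

lemma Nfun_zero (a b re Ψ : ℝ) (ha : 0 < a) (hb : 0 < b) (hre : 0 < re) (hΨ : 0 < Ψ) :
    Nfun a b re Ψ 0 = ENNReal.ofReal
      (Ψ ^ a * Real.Gamma (a + b) / (a * Real.Gamma a * Real.Gamma b * re ^ a)) := by
  have hK : (0:ℝ) ≤ Ψ ^ a * Real.Gamma (a + b) / (a * Real.Gamma a * Real.Gamma b * re ^ a) := by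
    positivity
  rw [Nfun, lintegral_prod _ (measurable_Gfun a b re Ψ 0).aemeasurable]
  have hinner : ∀ y : ℝ, (∫⁻ x, Gfun a b re Ψ 0 (y, x))
      = gammaPDF b re y * ∫⁻ x in Iio (Ψ * y), p0 a x := by
    intro y
    have hGy : (fun x => Gfun a b re Ψ 0 (y, x))
        = (Iio (Ψ * y)).indicator (fun x => p0 a x * gammaPDF b re y) := by
      funext x
      simp [Gfun, Set.indicator_apply, Set.mem_Iio]
    rw [hGy, lintegral_indicator measurableSet_Iio,
      lintegral_mul_const _ (measurable_p0 a), mul_comm]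
  simp_rw [hinner]
  rw [← lintegral_add_compl
    (fun y => gammaPDF b re y * ∫⁻ x in Iio (Ψ * y), p0 a x) measurableSet_Ioi]
  have hcompl : ∫⁻ y in (Ioi (0:ℝ))ᶜ, gammaPDF b re y * ∫⁻ x in Iio (Ψ * y), p0 a x = 0 := by
    rw [compl_Ioi,
      setLIntegral_congr_fun_ae measurableSet_Iic (ae_of_all _ fun y (hy : y ≤ 0) => ?_),
      lintegral_zero]
    rcases lt_or_eq_of_le hy with hy' | hy'
    · rw [gammaPDF_of_neg hy', zero_mul]
    · have hp : ∫⁻ x in Iio (Ψ * y), p0 a x = 0 :=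
        p0_int_nonpos a (by rw [hy', mul_zero])
      rw [hp, mul_zero]
  have hmain : ∫⁻ y in Ioi (0:ℝ), gammaPDF b re y * ∫⁻ x in Iio (Ψ * y), p0 a x
      = ENNReal.ofReal (Ψ ^ a * Real.Gamma (a + b)
          / (a * Real.Gamma a * Real.Gamma b * re ^ a)) := by
    have hptwise : ∀ y ∈ Ioi (0:ℝ), gammaPDF b re y * ∫⁻ x in Iio (Ψ * y), p0 a x
        = ENNReal.ofReal (Ψ ^ a * Real.Gamma (a + b)
            / (a * Real.Gamma a * Real.Gamma b * re ^ a)) * gammaPDF (a + b) re y := by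
      intro y hy
      have hy0 : (0:ℝ) < y := hy
      rw [p0_int_pos ha (by positivity : (0:ℝ) < Ψ * y), gammaPDF_of_nonneg hy0.le,
        gammaPDF_of_nonneg hy0.le,
        ← ENNReal.ofReal_mul (by positivity), ← ENNReal.ofReal_mul hK]
      congr 1
      have e1 : (Ψ * y) ^ a = Ψ ^ a * y ^ a := Real.mul_rpow hΨ.le hy0.le
      have e2 : re ^ (a + b) = re ^ a * re ^ b := Real.rpow_add hre a b
      have e3 : y ^ (a + b - 1) = y ^ (b - 1) * y ^ a := by
        rw [show a + b - 1 = (b - 1) + a by ring, Real.rpow_add hy0]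
      rw [e1, e2, e3]
      have hGa : Real.Gamma a ≠ 0 := (Real.Gamma_pos_of_pos ha).ne'
      have hGb : Real.Gamma b ≠ 0 := (Real.Gamma_pos_of_pos hb).ne'
      have hGab : Real.Gamma (a + b) ≠ 0 := (Real.Gamma_pos_of_pos (by linarith)).ne'
      have hrea : re ^ a ≠ 0 := (Real.rpow_pos_of_pos hre a).ne'
      field_simp
    rw [setLIntegral_congr_fun_ae measurableSet_Ioi (ae_of_all _ hptwise),
      lintegral_const_mul _ (measurable_gammaPDF (a + b) re),
      gamma_lintegral_Ioi (by linarith : (0:ℝ) < a + b) hre, mul_one]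
  rw [hmain, hcompl, add_zero]

lemma aux_tendsto {h : ℝ → ℝ} {L : ℝ}
    (mono : ∀ x y : ℝ, 1 ≤ x → x ≤ y → h x ≤ h y)
    (hub : ∀ x : ℝ, 1 ≤ x → h x ≤ L)
    (hseq : Tendsto (fun n : ℕ => h ((n : ℝ) + 1)) atTop (nhds L)) :
    Tendsto h atTop (nhds L) := by
  rw [Metric.tendsto_atTop] at hseq ⊢
  intro ε hε
  obtain ⟨N, hN⟩ := hseq ε hε
  refine ⟨(N : ℝ) + 1, fun x hx => ?_⟩
  have hN0 : (0:ℝ) ≤ (N : ℝ) := Nat.cast_nonneg N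
  have h1 : (1:ℝ) ≤ (N : ℝ) + 1 := by linarith
  have h2 := hN N le_rfl
  have h3 : h ((N : ℝ) + 1) ≤ h x := mono _ _ h1 hx
  have h4 : h x ≤ L := hub x (le_trans h1 hx)
  have h5 : h ((N : ℝ) + 1) ≤ L := hub _ h1
  rw [Real.dist_eq, abs_of_nonpos (by linarith)] at h2 ⊢
  linarith

end SOPLAux

/-- SOP lower bound as a function of the legitimate electrical SNR `μd`, realized as a
probability under the product of the two Gamma laws. -/
noncomputable def SOPL (ld le kd ke μe Ψ : ℝ) (μd : ℝ) : ℝ :=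
  (((gammaMeasure ld (1 / (kd * μd))).prod (gammaMeasure le (1 / (ke * μe))))
    {p : ℝ × ℝ | p.1 < Ψ * p.2}).toReal

/-- `SOP_L(μ_d)` is strictly decreasing in `μ_d` and asymptotically
`SOP_L(μ_d) ∼ C μ_d^{−l_d}` with
`C = (Ψ k_e μ_e/k_d)^{l_d} Γ(l_d+l_e)/(l_d Γ(l_d) Γ(l_e))`: secrecy diversity order `l_d`. -/
theorem sopl_decreasing_and_asymptotic (ld le kd ke μe Ψ : ℝ)
    (hld : 0 < ld) (hle : 0 < le) (hkd : 0 < kd) (hke : 0 < ke)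
    (hμe : 0 < μe) (hΨ : 0 < Ψ) :
    StrictAntiOn (SOPL ld le kd ke μe Ψ) (Set.Ioi 0) ∧
    Tendsto (fun μd : ℝ =>
        SOPL ld le kd ke μe Ψ μd /
          ((Ψ * ke * μe / kd) ^ ld * Real.Gamma (ld + le) /
              (ld * Real.Gamma ld * Real.Gamma le) * μd ^ (-ld)))
      atTop (nhds 1) := by
  have hre : (0:ℝ) < 1 / (ke * μe) := by positivity
  constructor
  · intro μ1 hμ1 μ2 hμ2 h12
    have hμ1' : (0:ℝ) < μ1 := hμ1
    have hμ2' : (0:ℝ) < μ2 := hμ2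
    have hc1 : (0:ℝ) < 1 / (kd * μ2) := by positivity
    have hc12 : 1 / (kd * μ2) < 1 / (kd * μ1) :=
      one_div_lt_one_div_of_lt (by positivity) (by nlinarith)
    have hlt := SOPLAux.measure_lt_measure ld le (1 / (ke * μe)) Ψ hld hle hre hΨ hc1 hc12
    haveI := isProbabilityMeasure_gammaMeasure hld hc1
    haveI := isProbabilityMeasure_gammaMeasure hld (hc1.trans hc12)
    haveI := isProbabilityMeasure_gammaMeasure hle hre
    exact (ENNReal.toReal_lt_toReal (measure_ne_top _ _) (measure_ne_top _ _)).mpr hlt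
  · set K : ℝ := Ψ ^ ld * Real.Gamma (ld + le)
      / (ld * Real.Gamma ld * Real.Gamma le * (1 / (ke * μe)) ^ ld) with hKdef
    have hKpos : 0 < K := by rw [hKdef]; positivity
    have hN0 : SOPLAux.Nfun ld le (1 / (ke * μe)) Ψ 0 = ENNReal.ofReal K :=
      SOPLAux.Nfun_zero ld le (1 / (ke * μe)) Ψ hld hle hre hΨ
    have hfin : ∀ c : ℝ, 0 ≤ c → SOPLAux.Nfun ld le (1 / (ke * μe)) Ψ c ≠ ∞ := by
      intro c hc
      refine (lt_of_le_of_lt (SOPLAux.Nfun_le _ _ _ _ hc) ?_).ne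
      rw [hN0]
      exact ENNReal.ofReal_lt_top
    have htend : Tendsto
        (fun x : ℝ => (SOPLAux.Nfun ld le (1 / (ke * μe)) Ψ (1 / (kd * x))).toReal)
        atTop (nhds K) := by
      refine SOPLAux.aux_tendsto ?_ ?_ ?_
      · intro x y hx hxy
        have hx0 : (0:ℝ) < x := lt_of_lt_of_le one_pos hx
        have hy0 : (0:ℝ) < y := hx0.trans_le hxy
        refine (ENNReal.toReal_le_toReal (hfin _ (by positivity))
          (hfin _ (by positivity))).mpr ?_
        refine lintegral_mono fun z => SOPLAux.Gfun_anti _ _ _ _ (by positivity) ?_ z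
        exact one_div_le_one_div_of_le (by positivity) (by nlinarith)
      · intro x hx
        have hx0 : (0:ℝ) < x := lt_of_lt_of_le one_pos hx
        have hle' := SOPLAux.Nfun_le ld le (1 / (ke * μe)) Ψ
          (c := 1 / (kd * x)) (by positivity)
        rw [hN0] at hle'
        calc (SOPLAux.Nfun ld le (1 / (ke * μe)) Ψ (1 / (kd * x))).toReal
            ≤ (ENNReal.ofReal K).toReal :=
              (ENNReal.toReal_le_toReal (hfin _ (by positivity))
                ENNReal.ofReal_ne_top).mpr hle'
          _ = K := ENNReal.toReal_ofReal hKpos.le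
      · have h1 := SOPLAux.Nfun_tendsto ld le (1 / (ke * μe)) Ψ kd hkd
        have h2 := (ENNReal.tendsto_toReal
          (by rw [hN0]; exact ENNReal.ofReal_ne_top)).comp h1
        rw [hN0, ENNReal.toReal_ofReal hKpos.le] at h2
        exact h2
    have hdiv : Tendsto
        (fun x : ℝ => (SOPLAux.Nfun ld le (1 / (ke * μe)) Ψ (1 / (kd * x))).toReal / K)
        atTop (nhds 1) := by
      have := htend.div_const K
      rwa [div_self hKpos.ne'] at this
    refine Filter.Tendsto.congr' ?_ hdiv
    filter_upwards [eventually_ge_atTop (1:ℝ)] with μd hμd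
    have hμd0 : (0:ℝ) < μd := lt_of_lt_of_le one_pos hμd
    have hc : (0:ℝ) < 1 / (kd * μd) := by positivity
    have hrep := SOPLAux.rep2 ld le (1 / (ke * μe)) Ψ hld hle hre hc
    have hGa : Real.Gamma ld ≠ 0 := (Real.Gamma_pos_of_pos hld).ne'
    have hGb : Real.Gamma le ≠ 0 := (Real.Gamma_pos_of_pos hle).ne'
    have hGab : Real.Gamma (ld + le) ≠ 0 := (Real.Gamma_pos_of_pos (by linarith)).ne'
    have hkd' : kd ^ ld ≠ 0 := (Real.rpow_pos_of_pos hkd ld).ne'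
    have hke' : ke ^ ld ≠ 0 := (Real.rpow_pos_of_pos hke ld).ne'
    have hμe' : μe ^ ld ≠ 0 := (Real.rpow_pos_of_pos hμe ld).ne'
    have hμd' : μd ^ ld ≠ 0 := (Real.rpow_pos_of_pos hμd0 ld).ne'
    have hCK : (Ψ * ke * μe / kd) ^ ld * Real.Gamma (ld + le)
          / (ld * Real.Gamma ld * Real.Gamma le) * μd ^ (-ld)
        = (1 / (kd * μd)) ^ ld * K := by
      have e1 : (Ψ * ke * μe / kd) ^ ld = Ψ ^ ld * ke ^ ld * μe ^ ld / kd ^ ld := by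
        rw [Real.div_rpow (by positivity) hkd.le, Real.mul_rpow (by positivity) hμe.le,
          Real.mul_rpow hΨ.le hke.le]
      have e2 : (1 / (kd * μd)) ^ ld = 1 / (kd ^ ld * μd ^ ld) := by
        rw [Real.div_rpow zero_le_one (by positivity), Real.one_rpow,
          Real.mul_rpow hkd.le hμd0.le]
      have e3 : (1 / (ke * μe)) ^ ld = 1 / (ke ^ ld * μe ^ ld) := by
        rw [Real.div_rpow zero_le_one (by positivity), Real.one_rpow,
          Real.mul_rpow hke.le hμe.le]
      have e4 : μd ^ (-ld) = 1 / μd ^ ld := by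
        rw [Real.rpow_neg hμd0.le, one_div]
      rw [hKdef, e1, e2, e3, e4]
      field_simp
    show (SOPLAux.Nfun ld le (1 / (ke * μe)) Ψ (1 / (kd * μd))).toReal / K
        = SOPL ld le kd ke μe Ψ μd
          / ((Ψ * ke * μe / kd) ^ ld * Real.Gamma (ld + le)
              / (ld * Real.Gamma ld * Real.Gamma le) * μd ^ (-ld))
    rw [SOPL, hrep, ENNReal.toReal_mul, ENNReal.toReal_ofReal (by positivity), hCK,
      mul_div_mul_left _ _ (Real.rpow_pos_of_pos hc ld).ne']
end
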